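/- Every tree in Λ_d is simple. Moreover, if γ is a simple terminally weighted rooted tree possessing a branch vertex, then every monoidal transform of γ is simple. -/

import Mathlib

open scoped Classical

noncomputable section

/-- A (pre-)tree: a finite set of natural-number labelled vertices, a root,
a parent function and a weight function.  Well-formedness is the predicate
`IsTree` below. -/
structure PreTree where
  verts : Finset ℕ
  root : ℕ
  parent : ℕ → ℕ
  wt : ℕ → ℕ

namespace PreTree

/-- `t.Anc u v` means `u ⪯ v` : `u` lies on the (parent-)path from the root to `v`. -/
def Anc (t : PreTree) (u v : ℕ) : Prop := ∃ n : ℕ, t.parent^[n] v = u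

/-- strict ancestor `u ≺ v`. -/
def SAnc (t : PreTree) (u v : ℕ) : Prop := t.Anc u v ∧ u ≠ v

/-- `t` is an honest finite rooted tree: the root is a vertex, vertices are closed
under `parent`, the root is a fixed point of `parent`, and every vertex descends
from the root. -/
def IsTree (t : PreTree) : Prop :=
  t.root ∈ t.verts ∧ (∀ v ∈ t.verts, t.parent v ∈ t.verts) ∧
    t.parent t.root = t.root ∧ ∀ v ∈ t.verts, t.Anc t.root v

/-- The direct descendants (children) of a vertex. -/
def children (t : PreTree) (u : ℕ) : Finset ℕ :=
  t.verts.filter fun x => t.parent x = u ∧ x ≠ u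

/-- A vertex is terminal iff it has no (direct) descendants. -/
def Terminal (t : PreTree) (v : ℕ) : Prop := t.children v = ∅

/-- Terminally weighted: a vertex has positive weight iff it is terminal. -/
def TerminallyWeighted (t : PreTree) : Prop :=
  ∀ v ∈ t.verts, (0 < t.wt v ↔ t.children v = ∅)

/-- The total weight of a weighted tree. -/
def totalWeight (t : PreTree) : ℕ := ∑ v ∈ t.verts, t.wt v

/-- Stable: every ghost non-root vertex has at least three edges attached to it,
i.e. at least two children. -/
def Stable (t : PreTree) : Prop :=
  ∀ v ∈ t.verts, v ≠ t.root → t.wt v = 0 → 2 ≤ (t.children v).card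

/-- Semistable: every ghost non-root vertex has at least two edges attached to it,
i.e. at least one child. -/
def Semistable (t : PreTree) : Prop :=
  ∀ v ∈ t.verts, v ≠ t.root → t.wt v = 0 → 1 ≤ (t.children v).card

/-- `b` is the last vertex `v_r` of the trunk: every strict ancestor of `b` has
exactly one child while `b` does not. -/
def IsTrunkEnd (t : PreTree) (b : ℕ) : Prop :=
  b ∈ t.verts ∧ (t.children b).card ≠ 1 ∧ ∀ p, t.SAnc p b → (t.children p).card = 1

/-- The number of branches: the number of children of the trunk end (`0` for a
path tree).  For an honest tree the trunk end is unique, so the sum below has at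
most one nonzero term. -/
def br (t : PreTree) : ℕ :=
  ∑ b ∈ t.verts.filter (fun b => t.IsTrunkEnd b), (t.children b).card

/-- `b` is the branch vertex: the trunk end, provided it has at least two children. -/
def IsBranchVertex (t : PreTree) (b : ℕ) : Prop :=
  t.IsTrunkEnd b ∧ 2 ≤ (t.children b).card

/-- The subtree of `t` rooted at `v` (with the inherited weights). -/
def subtreeAt (t : PreTree) (v : ℕ) : PreTree where
  verts := t.verts.filter fun u => t.Anc v u
  root := v
  parent := fun u => if u = v then v else t.parent u
  wt := t.wt

/-- Simple: every branch (subtree rooted at a child of the branch vertex) is stable. -/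
def Simple (t : PreTree) : Prop :=
  ∀ b, t.IsTrunkEnd b → ∀ c ∈ t.children b, (t.subtreeAt c).Stable

/-- Pruning `t` from `v`: delete all strict descendants of `v` and add their
weights to the weight of `v`. -/
def prune (t : PreTree) (v : ℕ) : PreTree where
  verts := t.verts.filter fun u => ¬ t.SAnc v u
  root := t.root
  parent := t.parent
  wt := fun u =>
    if u = v then t.wt v + ∑ x ∈ t.verts.filter (fun x => t.SAnc v x), t.wt x
    else t.wt u

/-- Normalization: repeatedly prune from positively weighted non-terminal vertices
until every positive vertex is terminal.  In closed form: keep exactly the vertices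
with no positively weighted strict ancestor; a kept ghost vertex keeps weight `0`,
while a kept positive vertex absorbs the weights of all of its descendants. -/
def normalize (t : PreTree) : PreTree where
  verts := t.verts.filter fun u => ∀ p, t.SAnc p u → t.wt p = 0
  root := t.root
  parent := t.parent
  wt := fun u =>
    if t.wt u = 0 then 0 else ∑ x ∈ t.verts.filter (fun x => t.Anc u x), t.wt x

/-- Collapsing a (non-root) vertex `v`: merge `v` into its direct ascendant (the
merged vertex carries the sum of the two weights, the children of `v` become
children of the merged vertex), then normalize. -/
def collapse (t : PreTree) (v : ℕ) : PreTree :=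
  normalize
    { verts := t.verts.erase v
      root := t.root
      parent := fun u => if t.parent u = v then t.parent v else t.parent u
      wt := fun u => if u = t.parent v then t.wt (t.parent v) + t.wt v else t.wt u }

/-- Advancing a (non-root) vertex `v`: every direct descendant `u ≠ v` of the direct
ascendant of `v` is re-attached to `v`, then normalize. -/
def advance (t : PreTree) (v : ℕ) : PreTree :=
  normalize
    { verts := t.verts
      root := t.root
      parent := fun u =>
        if t.parent u = t.parent v ∧ u ≠ t.parent v ∧ u ≠ v then v else t.parent u
      wt := t.wt }

/-- The monoidal transforms of `t`: the advancings of the direct descendants of the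
branch vertex. -/
def Mon (t : PreTree) : Set PreTree :=
  {s | ∃ b v, t.IsBranchVertex b ∧ v ∈ t.children b ∧ s = t.advance v}

/-- Isomorphism of weighted rooted trees. -/
def Iso (s t : PreTree) : Prop :=
  ∃ f : ℕ → ℕ, Set.BijOn f (s.verts : Set ℕ) (t.verts : Set ℕ) ∧ f s.root = t.root ∧
    (∀ v ∈ s.verts, f (s.parent v) = t.parent (f v)) ∧
    ∀ v ∈ s.verts, t.wt (f v) = s.wt v

/-- `Λ_d`: stable terminally weighted rooted trees of total weight `d`. -/
def Lambda (d : ℕ) : Set PreTree :=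
  {t | t.IsTree ∧ t.Stable ∧ t.TerminallyWeighted ∧ t.totalWeight = d}

/-- `Λ_{d,[k]}`, defined inductively: `Λ_{d,[1]} = Λ_d` and for `k ≥ 2`,
`Λ_{d,[k]} = {γ ∈ Λ_{d,[k−1]} : br γ ≥ k+1} ∪ {γ ∈ Mon γ' : γ' ∈ Λ_{d,[k−1]}, br γ' = k}`. -/
def LambdaK (d : ℕ) : ℕ → Set PreTree
  | 0 => Lambda d
  | 1 => Lambda d
  | k + 2 =>
      {t | t ∈ LambdaK d (k + 1) ∧ k + 3 ≤ t.br} ∪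
        {t | ∃ t' ∈ LambdaK d (k + 1), t'.br = k + 2 ∧ t ∈ t'.Mon}

/-- Condition (†): every non-terminal direct descendant of the branch vertex has at
least two direct descendants. -/
def Dagger (t : PreTree) : Prop :=
  ∀ b v, t.IsBranchVertex b → v ∈ t.children b → t.children v ≠ ∅ →
    2 ≤ (t.children v).card

/-- `z_{[b,o]} = ∏_{b ⪰ a ≻ o} z_a`, the product of the variables `z_a` over all
non-root vertices `a` on the path from the root to `b` (including `a = b`).
The variable `z_a` is `X (Sum.inl a)`; the variable `w_b` is `X (Sum.inr b)`. -/
def zpath (R : Type) [CommRing R] (t : PreTree) (b : ℕ) : MvPolynomial (ℕ ⊕ ℕ) R :=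
  ∏ a ∈ t.verts.filter (fun a => t.Anc a b ∧ a ≠ t.root), MvPolynomial.X (Sum.inl a)

/-- `Φ_γ = ∑_{b terminal} z_{[b,o]} · w_b`. -/
def Phi (R : Type) [CommRing R] (t : PreTree) : MvPolynomial (ℕ ⊕ ℕ) R :=
  ∑ b ∈ t.verts.filter (fun b => t.children b = ∅),
    zpath R t b * MvPolynomial.X (Sum.inr b)

end PreTree

/-!
A branch of any tree never contains the root, so a stable tree is simple.

Let `v` be a child of the branch vertex `b` and advance it. The siblings of `v` become children
of `v`, and `v` becomes the trunk end. If `v` is positive, pruning removes everything below `v`,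
leaving a path tree, which is trivially simple. If `v` is a ghost it is non-terminal, so nothing
is pruned and `v` has at least two children. A ghost vertex `x` below one of them is a strict
descendant of `b` in the original tree, lying in the branch at some child `c₀` of `b`, with
`x ≠ c₀`. Such an `x` keeps its children, so it has at least two by simplicity of the original
tree.
-/

namespace PreTree

variable {t s : PreTree} {b b' c p u v x : ℕ}

lemma anc_refl (t : PreTree) (v : ℕ) : t.Anc v v := ⟨0, rfl⟩

lemma anc_parent (t : PreTree) (v : ℕ) : t.Anc (t.parent v) v := ⟨1, rfl⟩

lemma Anc.trans (h₁ : t.Anc u v) (h₂ : t.Anc v x) : t.Anc u x := by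
  obtain ⟨m, rfl⟩ := h₁
  obtain ⟨n, rfl⟩ := h₂
  exact ⟨m + n, Function.iterate_add_apply _ _ _ _⟩

lemma Anc.of_parent (h : t.Anc u (t.parent x)) : t.Anc u x := h.trans (anc_parent t x)

lemma SAnc.anc_parent (h : t.SAnc u x) : t.Anc u (t.parent x) := by
  obtain ⟨⟨_ | n, hn⟩, hne⟩ := h
  · exact absurd hn.symm hne
  · exact ⟨n, hn⟩

lemma mem_children : x ∈ t.children u ↔ x ∈ t.verts ∧ t.parent x = u ∧ x ≠ u :=
  Finset.mem_filter

lemma IsTree.mem_of_anc (ht : t.IsTree) (hx : x ∈ t.verts) (h : t.Anc u x) : u ∈ t.verts := by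
  obtain ⟨n, rfl⟩ := h
  induction n generalizing x with
  | zero => exact hx
  | succ n ih => exact ih (ht.2.1 x hx)

lemma IsTree.mem_of_mem_children (ht : t.IsTree) (hv : v ∈ t.children b) : b ∈ t.verts := by
  obtain ⟨hvt, rfl, -⟩ := mem_children.1 hv
  exact ht.2.1 v hvt

lemma IsTree.anc_antisymm (ht : t.IsTree) (hx : x ∈ t.verts) (h₁ : t.Anc u x)
    (h₂ : t.Anc x u) : u = x := by
  obtain ⟨m, rfl⟩ := h₁
  obtain ⟨n, hn⟩ := h₂
  obtain ⟨N, hN⟩ := ht.2.2.2 x hx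
  have hroot (k : ℕ) : t.parent^[k] t.root = t.root := Function.iterate_fixed ht.2.2.1 k
  rcases Nat.eq_zero_or_pos m with rfl | hm
  · rfl
  -- `x` lies on a cycle of `parent`, which must be the fixed point `root` it descends to
  have hcycle : Function.IsPeriodicPt t.parent (n + m) x := by
    rw [Function.IsPeriodicPt, Function.IsFixedPt, Function.iterate_add_apply, hn]
  have hx_root : x = t.root := calc
    x = t.parent^[(n + m) * N] x := ((hcycle.mul_const N).eq).symm
    _ = t.parent^[(n + m) * N - N] (t.parent^[N] x) := by
      rw [← Function.iterate_add_apply, Nat.sub_add_cancel (Nat.le_mul_of_pos_left N (by omega))]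
    _ = t.root := by rw [hN, hroot]
  rw [hx_root, hroot]

lemma IsTree.exists_mem_children_anc (ht : t.IsTree) (hx : x ∈ t.verts) (h : t.SAnc p x) :
    ∃ c ∈ t.children p, t.Anc c x := by
  obtain ⟨⟨n, hn⟩, hne⟩ := h
  induction n generalizing x with
  | zero => exact absurd hn.symm hne
  | succ n ih =>
    by_cases hpx : t.parent x = p
    · exact ⟨x, mem_children.2 ⟨hx, hpx, Ne.symm hne⟩, anc_refl t x⟩
    · obtain ⟨c, hc, hcx⟩ := ih (ht.2.1 x hx) (Ne.symm hpx) hn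
      exact ⟨c, hc, hcx.of_parent⟩

lemma IsTrunkEnd.anc_or_anc (ht : t.IsTree) (hb : t.IsTrunkEnd b) (hu : u ∈ t.verts) :
    t.Anc u b ∨ t.Anc b u := by
  obtain ⟨n, hn⟩ := ht.2.2.2 u hu
  induction n generalizing u with
  | zero =>
    obtain rfl : u = t.root := hn
    exact Or.inl (ht.2.2.2 b hb.1)
  | succ n ih =>
    rcases ih (ht.2.1 u hu) hn with h | h
    · by_cases hpb : t.parent u = b
      · exact Or.inr (hpb ▸ anc_parent t u)
      by_cases hur : u = t.parent u
      · rw [hur]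
        exact Or.inl h
      -- `parent u` lies strictly above the trunk end, so `u` is its only child
      obtain ⟨c, hc, hcb⟩ := ht.exists_mem_children_anc hb.1 ⟨h, hpb⟩
      have hu' : u ∈ t.children (t.parent u) := mem_children.2 ⟨hu, rfl, hur⟩
      obtain rfl : u = c :=
        Finset.card_le_one.1 (hb.2.2 _ ⟨h, hpb⟩).le u hu' c hc
      exact Or.inl hcb
    · exact Or.inr h.of_parent

lemma IsTrunkEnd.eq (ht : t.IsTree) (hb : t.IsTrunkEnd b) (hb' : t.IsTrunkEnd b') :
    b' = b := by
  by_contra hne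
  rcases hb.anc_or_anc ht hb'.1 with h | h
  · exact hb'.2.1 (hb.2.2 b' ⟨h, hne⟩)
  · exact hb.2.1 (hb'.2.2 b ⟨h, Ne.symm hne⟩)

lemma children_subtreeAt (ht : t.IsTree) (hx : x ∈ t.verts) (hcx : t.SAnc c x) :
    (t.subtreeAt c).children x = t.children x := by
  ext y
  simp only [mem_children, subtreeAt, Finset.mem_filter]
  constructor
  · rintro ⟨⟨hy, -⟩, hyx, hne⟩
    split_ifs at hyx with hyc
    · exact absurd hyx hcx.2
    · exact ⟨hy, hyx, hne⟩
  · rintro ⟨hy, rfl, hne⟩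
    have hyc : y ≠ c := by
      rintro rfl
      exact hcx.2 (ht.anc_antisymm hx hcx.1 (anc_parent t y))
    exact ⟨⟨hy, hcx.1.of_parent⟩, by rw [if_neg hyc], hne⟩

lemma stable_subtreeAt_iff (ht : t.IsTree) :
    (t.subtreeAt c).Stable ↔
      ∀ x ∈ t.verts, t.SAnc c x → t.wt x = 0 → 2 ≤ (t.children x).card := by
  unfold Stable
  refine forall_congr' fun x => ⟨fun h hx hcx hx0 => ?_, fun h hx hxc hx0 => ?_⟩
  · rw [← children_subtreeAt ht hx hcx]
    exact h (Finset.mem_filter.2 ⟨hx, hcx.1⟩) (Ne.symm hcx.2) hx0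
  · obtain ⟨hx, hcx⟩ := Finset.mem_filter.1 hx
    rw [children_subtreeAt ht hx ⟨hcx, Ne.symm hxc⟩]
    exact h hx ⟨hcx, Ne.symm hxc⟩ hx0

lemma simple_of_isTrunkEnd (ht : t.IsTree) (hb : t.IsTrunkEnd b)
    (h : ∀ c ∈ t.children b, (t.subtreeAt c).Stable) : t.Simple := by
  intro b' hb'
  rw [hb.eq ht hb']
  exact h

lemma simple_of_stable (ht : t.IsTree) (hst : t.Stable) : t.Simple := by
  intro b _ c hc
  obtain ⟨-, hcb, hne⟩ := mem_children.1 hc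
  refine (stable_subtreeAt_iff ht).2 fun x hx hcx hx0 => hst x hx ?_ hx0
  rintro rfl
  obtain ⟨n, rfl⟩ := hcx.1
  rw [Function.iterate_fixed ht.2.2.1] at hcb hne
  rw [ht.2.2.1] at hcb
  exact hne hcb

lemma simple_of_card_children_le_one (h : ∀ u ∈ t.verts, (t.children u).card ≤ 1) :
    t.Simple := by
  intro b hb c hc
  have hb0 : t.children b = ∅ :=
    Finset.card_eq_zero.1 (by have := h b hb.1; have := hb.2.1; omega)
  simp [hb0] at hc

lemma Simple.congr (h : t.Simple) (hv : s.verts = t.verts) (hp : s.parent = t.parent)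
    (hw : ∀ u ∈ t.verts, s.wt u = t.wt u) : s.Simple := by
  obtain ⟨V, r, P, W⟩ := s
  obtain ⟨V', r', P', W'⟩ := t
  obtain rfl : V = V' := hv
  obtain rfl : P = P' := hp
  intro b hb c hc x hx hxc hx0
  exact h b hb c hc x hx hxc ((hw x (Finset.mem_filter.1 hx).1).symm.trans hx0)

lemma mem_normalize_verts :
    u ∈ (normalize s).verts ↔ u ∈ s.verts ∧ ∀ p, s.SAnc p u → s.wt p = 0 :=
  Finset.mem_filter

lemma children_normalize_subset : (normalize s).children u ⊆ s.children u := fun y hy => by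
  rw [mem_children] at hy ⊢
  exact ⟨(mem_normalize_verts.1 hy.1).1, hy.2⟩

lemma children_normalize_eq_empty (h : 0 < s.wt u) : (normalize s).children u = ∅ := by
  refine Finset.eq_empty_of_forall_notMem fun y hy => ?_
  obtain ⟨hy, hyu, hne⟩ := mem_children.1 hy
  have := (mem_normalize_verts.1 hy).2 u ⟨⟨1, hyu⟩, Ne.symm hne⟩
  omega

/-- The half of `TerminallyWeighted` that `normalize` establishes. -/
def PositiveTerminal (s : PreTree) : Prop := ∀ p ∈ s.verts, 0 < s.wt p → s.children p = ∅

lemma verts_normalize (hs : s.IsTree) (hterm : s.PositiveTerminal) :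
    (normalize s).verts = s.verts := by
  refine Finset.filter_true_of_mem fun u hu p hp => ?_
  by_contra hp0
  obtain ⟨c, hc, -⟩ := hs.exists_mem_children_anc hu hp
  simp [hterm p (hs.mem_of_anc hu hp.1) (Nat.pos_of_ne_zero hp0)] at hc

lemma wt_normalize (hs : s.IsTree) (hterm : s.PositiveTerminal) (hu : u ∈ s.verts) :
    (normalize s).wt u = s.wt u := by
  change (if s.wt u = 0 then 0 else ∑ x ∈ s.verts.filter (s.Anc u), s.wt x) = s.wt u
  split_ifs with h0
  · exact h0.symm
  have hdesc : s.verts.filter (s.Anc u) = {u} := by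
    ext x
    simp only [Finset.mem_filter, Finset.mem_singleton]
    constructor
    · rintro ⟨hx, hux⟩
      by_contra hxu
      obtain ⟨c, hc, -⟩ := hs.exists_mem_children_anc hx ⟨hux, Ne.symm hxu⟩
      simp [hterm u hu (Nat.pos_of_ne_zero h0)] at hc
    · rintro rfl
      exact ⟨hu, anc_refl s x⟩
  rw [hdesc, Finset.sum_singleton]

def reattach (t : PreTree) (v : ℕ) : PreTree where
  verts := t.verts
  root := t.root
  parent := fun u =>
    if t.parent u = t.parent v ∧ u ≠ t.parent v ∧ u ≠ v then v else t.parent u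
  wt := t.wt

lemma advance_eq_normalize_reattach (t : PreTree) (v : ℕ) :
    t.advance v = normalize (t.reattach v) := rfl

lemma reattach_parent (hv : v ∈ t.children b) (u : ℕ) :
    (t.reattach v).parent u = if t.parent u = b ∧ u ≠ b ∧ u ≠ v then v else t.parent u := by
  rw [← (mem_children.1 hv).2.1]
  rfl

lemma reattach_parent_self (hv : v ∈ t.children b) : (t.reattach v).parent v = b := by
  rw [reattach_parent hv, if_neg (fun h => h.2.2 rfl), (mem_children.1 hv).2.1]

lemma reattach_iterate_parent (ht : t.IsTree) (hv : v ∈ t.children b) (hu : t.Anc u b)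
    (n : ℕ) : (t.reattach v).parent^[n] u = t.parent^[n] u := by
  induction n generalizing u with
  | zero => rfl
  | succ n ih =>
    have hpu : (t.reattach v).parent u = t.parent u := by
      rw [reattach_parent hv, if_neg]
      rintro ⟨hpu, hub, -⟩
      exact hub (ht.anc_antisymm (ht.mem_of_mem_children hv) hu (hpu ▸ anc_parent t u))
    rw [Function.iterate_succ_apply, Function.iterate_succ_apply, hpu,
      ih ((anc_parent t u).trans hu)]

lemma reattach_anc_iff (ht : t.IsTree) (hv : v ∈ t.children b) (hu : t.Anc u b) :
    (t.reattach v).Anc p u ↔ t.Anc p u := by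
  simp only [Anc, reattach_iterate_parent ht hv hu]

lemma anc_of_reattach_anc (hv : v ∈ t.children b) (h : (t.reattach v).Anc v x) : t.Anc b x := by
  obtain ⟨n, hn⟩ := h
  induction n generalizing x with
  | zero =>
    obtain rfl : x = v := hn
    exact (mem_children.1 hv).2.1 ▸ anc_parent t x
  | succ n ih =>
    change (t.reattach v).parent^[n] ((t.reattach v).parent x) = v at hn
    rw [reattach_parent hv] at hn
    split_ifs at hn with hsib
    · exact ⟨1, hsib.1⟩
    · exact (ih hn).of_parent

lemma reattach_anc_of_sAnc (hv : v ∈ t.children b) (h : t.SAnc b u) :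
    (t.reattach v).Anc v u := by
  obtain ⟨⟨n, hn⟩, hne⟩ := h
  induction n generalizing u with
  | zero => exact absurd hn.symm hne
  | succ n ih =>
    by_cases hpu : t.parent u = b
    · by_cases huv : u = v
      · exact huv ▸ anc_refl _ u
      · refine ⟨1, ?_⟩
        rw [Function.iterate_one, reattach_parent hv, if_pos ⟨hpu, Ne.symm hne, huv⟩]
    · have hpu' : (t.reattach v).parent u = t.parent u := by
        rw [reattach_parent hv, if_neg (fun h => hpu h.1)]
      have hvu := ih (Ne.symm hpu) hn
      rw [← hpu'] at hvu
      exact hvu.of_parent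

lemma isTree_reattach (ht : t.IsTree) (hv : v ∈ t.children b) : (t.reattach v).IsTree := by
  have hb := ht.mem_of_mem_children hv
  have hroot_v : (t.reattach v).Anc t.root v :=
    Anc.of_parent (by rw [reattach_parent_self hv, reattach_anc_iff ht hv (anc_refl t b)]
                      exact ht.2.2.2 b hb)
  refine ⟨ht.1, fun u hu => ?_, ?_, fun u hu => ?_⟩
  · rw [reattach_parent hv]
    split_ifs
    exacts [(mem_children.1 hv).1, ht.2.1 u hu]
  · change (t.reattach v).parent t.root = t.root
    rw [reattach_parent hv, if_neg, ht.2.2.1]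
    rintro ⟨hrb, hne, -⟩
    exact hne (ht.2.2.1.symm.trans hrb)
  · obtain ⟨n, hn⟩ := ht.2.2.2 u hu
    induction n generalizing u with
    | zero =>
      obtain rfl : u = t.root := hn
      exact anc_refl _ _
    | succ n ih =>
      refine Anc.of_parent ?_
      rw [reattach_parent hv]
      split_ifs
      exacts [hroot_v, ih _ (ht.2.1 u hu) hn]

lemma reattach_children_parent (hv : v ∈ t.children b) : (t.reattach v).children b = {v} := by
  obtain ⟨hvt, hvb, hne⟩ := mem_children.1 hv
  ext y
  rw [mem_children, Finset.mem_singleton, reattach_parent hv]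
  constructor
  · rintro ⟨-, hyb, hyne⟩
    split_ifs at hyb with hsib
    · exact absurd hyb hne
    · by_contra hyv
      exact hsib ⟨hyb, hyne, hyv⟩
  · rintro rfl
    exact ⟨hvt, by rw [if_neg (fun h => h.2.2 rfl), hvb], hne⟩

lemma reattach_children_of_ne (hv : v ∈ t.children b) (hub : u ≠ b) (huv : u ≠ v) :
    (t.reattach v).children u = t.children u := by
  ext y
  rw [mem_children, mem_children, reattach_parent hv]
  split_ifs with hsib
  · exact ⟨fun h => absurd h.2.1.symm huv, fun h => absurd (h.2.1.symm.trans hsib.1) hub⟩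
  · rfl

lemma reattach_children_self (hv : v ∈ t.children b) :
    (t.reattach v).children v = t.children v ∪ (t.children b).erase v := by
  ext y
  simp only [mem_children, Finset.mem_union, Finset.mem_erase, reattach_parent hv]
  split_ifs with hsib
  · exact ⟨fun h => Or.inr ⟨h.2.2, h.1, hsib.1, hsib.2.1⟩,
      fun h => ⟨h.elim (·.1) (·.2.1), rfl, hsib.2.2⟩⟩
  · exact ⟨Or.inl, fun h => h.resolve_right fun h' => hsib ⟨h'.2.2.1, h'.2.2.2, h'.1⟩⟩

lemma two_le_card_reattach_children (hv : v ∈ t.children b) (hb : 2 ≤ (t.children b).card)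
    (hvt : (t.children v).Nonempty) : 2 ≤ ((t.reattach v).children v).card := by
  have hdisj : Disjoint (t.children v) ((t.children b).erase v) := by
    refine Finset.disjoint_left.2 fun y hyv hyb => ?_
    exact (mem_children.1 hv).2.2
      ((mem_children.1 hyv).2.1.symm.trans (mem_children.1 (Finset.mem_of_mem_erase hyb)).2.1)
  rw [reattach_children_self hv, Finset.card_union_of_disjoint hdisj, Finset.card_erase_of_mem hv]
  have := hvt.card_pos
  omega

lemma isTrunkEnd_reattach (ht : t.IsTree) (hb : t.IsTrunkEnd b) (hv : v ∈ t.children b)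
    (hcard : ((t.reattach v).children v).card ≠ 1) : (t.reattach v).IsTrunkEnd v := by
  refine ⟨(mem_children.1 hv).1, hcard, fun p hp => ?_⟩
  have hpb : t.Anc p b := by
    rw [← reattach_anc_iff ht hv (anc_refl t b), ← reattach_parent_self hv]
    exact hp.anc_parent
  by_cases hpb' : p = b
  · rw [hpb', reattach_children_parent hv, Finset.card_singleton]
  have hpv : p ≠ v := by
    rintro rfl
    obtain ⟨-, hvb, hne⟩ := mem_children.1 hv
    exact hne (ht.anc_antisymm hb.1 hpb (hvb ▸ anc_parent t p))
  rw [reattach_children_of_ne hv hpb' hpv]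
  exact hb.2.2 p ⟨hpb, hpb'⟩

lemma simple_reattach (ht : t.IsTree) (hS : t.Simple) (hb : t.IsBranchVertex b)
    (hv : v ∈ t.children b) (hvt : (t.children v).Nonempty) : (t.reattach v).Simple := by
  have hs := isTree_reattach ht hv
  have hcard := two_le_card_reattach_children hv hb.2 hvt
  refine simple_of_isTrunkEnd hs (isTrunkEnd_reattach ht hb.1 hv (by omega)) fun c hc => ?_
  have hvt' := (mem_children.1 hv).1
  obtain ⟨-, hcv, hcne⟩ := mem_children.1 hc
  rw [stable_subtreeAt_iff hs]
  intro x hx hcx hx0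
  have hvx : (t.reattach v).SAnc v x := by
    refine ⟨Anc.trans ⟨1, hcv⟩ hcx.1, ?_⟩
    rintro rfl
    exact hcne (hs.anc_antisymm hvt' hcx.1 ⟨1, hcv⟩)
  have hxb : x ≠ b := by
    rintro rfl
    exact (mem_children.1 hv).2.2 (hs.anc_antisymm hx hvx.1 ⟨1, reattach_parent_self hv⟩)
  obtain ⟨c₀, hc₀, hc₀x⟩ :=
    ht.exists_mem_children_anc hx ⟨anc_of_reattach_anc hv hvx.1, Ne.symm hxb⟩
  have hc₀x' : c₀ ≠ x := by
    rintro rfl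
    have hxv : (t.reattach v).parent c₀ = v := by
      rw [reattach_parent hv, if_pos ⟨(mem_children.1 hc₀).2.1, hxb, Ne.symm hvx.2⟩]
    have hcv' := hcx.anc_parent
    rw [hxv] at hcv'
    exact hcne (hs.anc_antisymm hvt' hcv' ⟨1, hcv⟩)
  rw [reattach_children_of_ne hv hxb (Ne.symm hvx.2)]
  exact (stable_subtreeAt_iff ht).1 (hS b hb.1 c₀ hc₀) x hx ⟨hc₀x, hc₀x'⟩ hx0

lemma card_children_normalize_reattach_le_one (ht : t.IsTree) (hb : t.IsTrunkEnd b)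
    (hv : v ∈ t.children b) (hpos : 0 < t.wt v) :
    ∀ u ∈ (normalize (t.reattach v)).verts,
      ((normalize (t.reattach v)).children u).card ≤ 1 := by
  intro u hu
  obtain ⟨hu, hghost⟩ := mem_normalize_verts.1 hu
  by_cases huv : u = v
  · rw [huv, children_normalize_eq_empty (s := t.reattach v) hpos, Finset.card_empty]
    omega
  refine (Finset.card_le_card children_normalize_subset).trans ?_
  by_cases hub : u = b
  · rw [hub, reattach_children_parent hv, Finset.card_singleton]
  rw [reattach_children_of_ne hv hub huv]
  rcases hb.anc_or_anc ht hu with h | h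
  · exact (hb.2.2 u ⟨h, hub⟩).le
  -- below `b`, every vertex other than `v` now hangs under the positive vertex `v`
  · have := hghost v ⟨reattach_anc_of_sAnc hv ⟨h, Ne.symm hub⟩, Ne.symm huv⟩
    exact absurd this hpos.ne'

lemma positiveTerminal_reattach (hTW : t.TerminallyWeighted) (hb : t.IsBranchVertex b)
    (hv : v ∈ t.children b) (hv0 : t.wt v = 0) : (t.reattach v).PositiveTerminal := by
  intro p hp hp0
  have hpb : p ≠ b := by
    rintro rfl
    have := hb.2
    rw [(hTW p hp).1 hp0, Finset.card_empty] at this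
    omega
  have hpv : p ≠ v := by
    rintro rfl
    exact absurd hv0 hp0.ne'
  rw [reattach_children_of_ne hv hpb hpv]
  exact (hTW p hp).1 hp0

lemma simple_advance (ht : t.IsTree) (hTW : t.TerminallyWeighted) (hS : t.Simple)
    (hb : t.IsBranchVertex b) (hv : v ∈ t.children b) : (t.advance v).Simple := by
  rw [advance_eq_normalize_reattach]
  rcases Nat.eq_zero_or_pos (t.wt v) with hv0 | hpos
  · have hvt : (t.children v).Nonempty := by
      rw [Finset.nonempty_iff_ne_empty]
      intro h
      have := (hTW v (mem_children.1 hv).1).2 h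
      omega
    have hs := isTree_reattach ht hv
    have hterm := positiveTerminal_reattach hTW hb hv hv0
    exact (simple_reattach ht hS hb hv hvt).congr (verts_normalize hs hterm) rfl
      fun u hu => wt_normalize hs hterm hu
  · exact simple_of_card_children_le_one (card_children_normalize_reattach_le_one ht hb.1 hv hpos)

end PreTree

/-- every tree in `Λ_d` is simple, and every monoidal transform of a
simple terminally weighted rooted tree (possessing a branch vertex) is simple. -/
theorem lambda_simple_and_mon_simple :
    (∀ d : ℕ, 0 < d → ∀ t ∈ PreTree.Lambda d, t.Simple) ∧
      ∀ t : PreTree, t.IsTree → t.TerminallyWeighted → t.Simple →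
        (∃ b, t.IsBranchVertex b) → ∀ g ∈ t.Mon, g.Simple := by
  refine ⟨fun d _ t ht => PreTree.simple_of_stable ht.1 ht.2.1, ?_⟩
  rintro t ht hTW hS - g ⟨b, v, hb, hv, rfl⟩
  exact PreTree.simple_advance ht hTW hS hb hv
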